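/- Let M be a positive integer, let σ² > 0, B > 0 and H₁,…,H_M > 0 be real numbers. For every vector of rates r₁,…,r_M ≥ 0 there exists a unique vector of powers p₁,…,p_M ≥ 0 such that for all m = 1,…,M, r_m = B · log₂(1 + (H_m · p_m)/(H_m · ∑_{l=m+1}^{M} p_l + σ²)); it is given by p_m = a_m − a_{m+1}, where a_m = ∑_{l=m}^{M} (σ²/H_l)(2^{r_l/B} − 1) · 2^{(∑_{s=m}^{l−1} r_s)/B} and a_{M+1} = 0. Moreover, for this p the total power satisfies ∑_{m=1}^{M} p_m = ∑_{m=1}^{M} (σ²/H_m − σ²/H_{m+1}) · 2^{(∑_{s=1}^{m} r_s)/B} − σ²/H₁ (with σ²/H_{M+1} := 0), and p_m = 0 if and only if r_m = 0. -/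

import Mathlib

/-!
Under successive interference cancellation user `m` is interfered only by `I = ∑_{l>m} p l`, and
its rate equation `r = B log₂(1 + H p / (H I + σ²))` is equivalent to
`p = (2^{r/B} - 1)(σ²/H + I)`. So the tail sums `S m = ∑_{l≥m} p l` of any admissible power
vector satisfy the backward recursion `S m = S (m+1) + (2^{r m/B} - 1)(σ²/H m + S (m+1))`,
`S (M+1) = 0`, which the cumulative powers `cumPow` also satisfy; hence `S = cumPow` and
`p m = cumPow m - cumPow (m+1)`. The closed form of the total power `cumPow 1` is Abel summation.
-/

open Finset

/-- Cumulative power `a m = ∑_{l=m}^M (σ²/H l)(2^{r l/B} - 1) 2^{(∑_{s=m}^{l-1} r s)/B}`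
of users `m,…,M` in the NOMA power-rate conversion (note `cumPow M σ2 B H r (M+1) = 0`). -/
noncomputable def cumPow (M : ℕ) (σ2 B : ℝ) (H r : ℕ → ℝ) (m : ℕ) : ℝ :=
  ∑ l ∈ Finset.Icc m M,
    (σ2 / H l) * ((2 : ℝ) ^ (r l / B) - 1)
      * (2 : ℝ) ^ ((∑ s ∈ Finset.Icc m (l - 1), r s) / B)

lemma sum_Icc_eq_add_sum_Icc_succ {R : Type*} [AddCommMonoid R] (f : ℕ → R) {m n : ℕ}
    (h : m ≤ n) : ∑ l ∈ Icc m n, f l = f m + ∑ l ∈ Icc (m + 1) n, f l := by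
  rw [Icc_add_one_left_eq_Ioc, add_sum_Ioc_eq_sum_Icc h]

lemma eq_of_eq_step {α : Type*} {f g : ℕ → α} (F : ℕ → α → α) {n N : ℕ}
    (hf : ∀ m ∈ Ico n N, f m = F m (f (m + 1)))
    (hg : ∀ m ∈ Ico n N, g m = F m (g (m + 1))) (hN : f N = g N) :
    ∀ m ∈ Icc n N, f m = g m := by
  intro m hm
  rw [mem_Icc] at hm
  refine Nat.decreasingInduction' (fun k hkN hmk ih => ?_) hm.2 hN
  have hk : k ∈ Ico n N := mem_Ico.2 ⟨hm.1.trans hmk, hkN⟩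
  rw [hf k hk, hg k hk, ih]

lemma eq_of_sum_Icc_eq {R : Type*} [AddCommGroup R] {p q : ℕ → R} {M : ℕ}
    (h : ∀ m ∈ Icc 1 (M + 1), ∑ l ∈ Icc m M, p l = ∑ l ∈ Icc m M, q l) :
    ∀ m ∈ Icc 1 M, p m = q m := by
  intro m hm
  rw [mem_Icc] at hm
  have hm' := h m (mem_Icc.2 ⟨hm.1, by omega⟩)
  rw [sum_Icc_eq_add_sum_Icc_succ _ hm.2, sum_Icc_eq_add_sum_Icc_succ _ hm.2,
    h (m + 1) (mem_Icc.2 ⟨by omega, by omega⟩)] at hm'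
  exact add_right_cancel hm'

lemma sum_Icc_mul_sub_eq {R : Type*} [CommRing R] (w c : ℕ → R) {M : ℕ} (hM : 0 < M) :
    ∑ l ∈ Icc 1 M, w l * (c l - c (l - 1))
      = ∑ l ∈ Icc 1 M, (w l - if l < M then w (l + 1) else 0) * c l - w 1 * c 0 := by
  have key : ∀ K, ∑ l ∈ Icc 1 (K + 1), w l * (c l - c (l - 1))
      = ∑ l ∈ Icc 1 K, (w l - w (l + 1)) * c l + w (K + 1) * c (K + 1) - w 1 * c 0 := by
    intro K
    induction K with
    | zero => simp [mul_sub]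
    | succ K ih =>
      rw [sum_Icc_succ_top (by omega), ih, sum_Icc_succ_top (by omega), Nat.add_sub_cancel]
      ring
  obtain ⟨K, rfl⟩ : ∃ K, M = K + 1 := ⟨M - 1, by omega⟩
  rw [key, sum_Icc_succ_top (by omega), if_neg (by omega)]
  have hlow : ∀ l ∈ Icc 1 K, (w l - if l < K + 1 then w (l + 1) else 0) * c l
      = (w l - w (l + 1)) * c l := fun l hl => by
    rw [if_pos (by rw [mem_Icc] at hl; omega)]
  rw [sum_congr rfl hlow]
  ring

lemma eq_mul_logb_one_add_iff {B h σ2 I x r : ℝ} (hB : 0 < B) (hh : 0 < h) (hσ : 0 < σ2)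
    (hI : 0 ≤ I) (hx : 0 ≤ x) :
    r = B * Real.logb 2 (1 + h * x / (h * I + σ2)) ↔ x = (2 ^ (r / B) - 1) * (σ2 / h + I) := by
  have hD : 0 < h * I + σ2 := by positivity
  have hy : 0 < 1 + h * x / (h * I + σ2) := by positivity
  rw [eq_comm, mul_comm B, ← eq_div_iff hB.ne', Real.logb_eq_iff_rpow_eq two_pos (by norm_num) hy,
    ← sub_eq_iff_eq_add', eq_div_iff hD.ne']
  have hσh : σ2 / h + I = (h * I + σ2) / h := by field_simp; ring
  rw [hσh, mul_div_assoc', eq_div_iff hh.ne']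
  constructor <;> intro hxr <;> linarith

/-- Cumulative power of users `m,…,M` from the cumulative power `x` of users `m+1,…,M`, which is
the interference user `m` sees after successive interference cancellation. -/
noncomputable def cumPowStep (σ2 B : ℝ) (H r : ℕ → ℝ) (m : ℕ) (x : ℝ) : ℝ :=
  x + (2 ^ (r m / B) - 1) * (σ2 / H m + x)

section cumPow

variable {M : ℕ} {σ2 B : ℝ} {H r : ℕ → ℝ}

lemma cumPow_succ_self : cumPow M σ2 B H r (M + 1) = 0 := by
  rw [cumPow, Icc_eq_empty (by omega), sum_empty]

lemma cumPow_eq_cumPowStep {m : ℕ} (hm : 1 ≤ m) (hmM : m ≤ M) :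
    cumPow M σ2 B H r m = cumPowStep σ2 B H r m (cumPow M σ2 B H r (m + 1)) := by
  have htail : ∀ l ∈ Icc (m + 1) M,
      σ2 / H l * (2 ^ (r l / B) - 1) * (2 : ℝ) ^ ((∑ s ∈ Icc m (l - 1), r s) / B)
        = 2 ^ (r m / B)
          * (σ2 / H l * (2 ^ (r l / B) - 1) * 2 ^ ((∑ s ∈ Icc (m + 1) (l - 1), r s) / B)) := by
    intro l hl
    rw [mem_Icc] at hl
    rw [sum_Icc_eq_add_sum_Icc_succ _ (by omega : m ≤ l - 1), add_div, Real.rpow_add two_pos]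
    ring
  rw [cumPow, sum_Icc_eq_add_sum_Icc_succ _ hmM, Icc_eq_empty (by omega), sum_empty, zero_div,
    Real.rpow_zero, sum_congr rfl htail, ← mul_sum, cumPowStep, cumPow]
  ring

lemma cumPow_nonneg (hσ : 0 ≤ σ2) (hB : 0 ≤ B) (hH : ∀ m ∈ Icc 1 M, 0 ≤ H m)
    (hr : ∀ m ∈ Icc 1 M, 0 ≤ r m) {m : ℕ} (hm : 1 ≤ m) : 0 ≤ cumPow M σ2 B H r m := by
  refine sum_nonneg fun l hl => ?_
  have hl' : l ∈ Icc 1 M := by rw [mem_Icc] at hl ⊢; omega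
  have hgain : 1 ≤ (2 : ℝ) ^ (r l / B) :=
    Real.one_le_rpow one_le_two (div_nonneg (hr l hl') hB)
  have := hH l hl'
  have : 0 ≤ (2 : ℝ) ^ (r l / B) - 1 := by linarith
  positivity

lemma cumPow_sub_cumPow_succ {m : ℕ} (hm : 1 ≤ m) (hmM : m ≤ M) :
    cumPow M σ2 B H r m - cumPow M σ2 B H r (m + 1)
      = (2 ^ (r m / B) - 1) * (σ2 / H m + cumPow M σ2 B H r (m + 1)) := by
  rw [cumPow_eq_cumPowStep hm hmM, cumPowStep]
  ring

lemma cumPow_sub_cumPow_succ_nonneg (hσ : 0 ≤ σ2) (hB : 0 ≤ B) (hH : ∀ m ∈ Icc 1 M, 0 ≤ H m)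
    (hr : ∀ m ∈ Icc 1 M, 0 ≤ r m) {m : ℕ} (hm : m ∈ Icc 1 M) :
    0 ≤ cumPow M σ2 B H r m - cumPow M σ2 B H r (m + 1) := by
  have hgain : 1 ≤ (2 : ℝ) ^ (r m / B) := Real.one_le_rpow one_le_two (div_nonneg (hr m hm) hB)
  have := hH m hm
  have := cumPow_nonneg hσ hB hH hr (m := m + 1) (by omega)
  rw [cumPow_sub_cumPow_succ (mem_Icc.1 hm).1 (mem_Icc.1 hm).2]
  exact mul_nonneg (by linarith) (by positivity)

lemma sum_Icc_cumPow_sub_cumPow_succ {m : ℕ} (hm : m ≤ M + 1) :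
    ∑ l ∈ Icc m M, (cumPow M σ2 B H r l - cumPow M σ2 B H r (l + 1)) = cumPow M σ2 B H r m := by
  rw [← Ico_add_one_right_eq_Icc, sum_congr rfl fun l _ => (neg_sub _ _).symm,
    sum_neg_distrib, sum_Ico_sub (cumPow M σ2 B H r) hm, cumPow_succ_self]
  ring

lemma cumPow_one_eq (hM : 0 < M) :
    cumPow M σ2 B H r 1
      = (∑ m ∈ Icc 1 M, (σ2 / H m - if m < M then σ2 / H (m + 1) else 0)
          * (2 : ℝ) ^ ((∑ s ∈ Icc 1 m, r s) / B)) - σ2 / H 1 := by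
  set c : ℕ → ℝ := fun m => 2 ^ ((∑ s ∈ Icc 1 m, r s) / B) with hc
  have hterm : ∀ l ∈ Icc 1 M,
      σ2 / H l * (2 ^ (r l / B) - 1) * (2 : ℝ) ^ ((∑ s ∈ Icc 1 (l - 1), r s) / B)
        = σ2 / H l * (c l - c (l - 1)) := by
    intro l hl
    obtain ⟨k, rfl⟩ : ∃ k, l = k + 1 := ⟨l - 1, by rw [mem_Icc] at hl; omega⟩
    simp only [hc, Nat.add_sub_cancel]
    rw [sum_Icc_succ_top (by omega : 1 ≤ k + 1), add_div, Real.rpow_add two_pos]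
    ring
  have hc0 : c 0 = 1 := by simp [hc]
  rw [cumPow, sum_congr rfl hterm, sum_Icc_mul_sub_eq _ _ hM, hc0, mul_one]

end cumPow

lemma sum_Icc_eq_cumPow_of_eq_rate {M : ℕ} {σ2 B : ℝ} {H r q : ℕ → ℝ} (hσ : 0 < σ2) (hB : 0 < B)
    (hH : ∀ m ∈ Icc 1 M, 0 < H m) (hq : ∀ m ∈ Icc 1 M, 0 ≤ q m)
    (hrate : ∀ m ∈ Icc 1 M,
      r m = B * Real.logb 2 (1 + H m * q m / (H m * (∑ l ∈ Icc (m + 1) M, q l) + σ2))) :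
    ∀ m ∈ Icc 1 (M + 1), ∑ l ∈ Icc m M, q l = cumPow M σ2 B H r m := by
  refine eq_of_eq_step (cumPowStep σ2 B H r) (fun m hm => ?_) (fun m hm => ?_) ?_
  · have hm' : m ∈ Icc 1 M := by rw [mem_Ico] at hm; rw [mem_Icc]; omega
    have hI : 0 ≤ ∑ l ∈ Icc (m + 1) M, q l :=
      sum_nonneg fun l hl => hq l (by rw [mem_Icc] at hl hm' ⊢; omega)
    rw [sum_Icc_eq_add_sum_Icc_succ _ (mem_Icc.1 hm').2, cumPowStep,
      (eq_mul_logb_one_add_iff hB (hH m hm') hσ hI (hq m hm')).1 (hrate m hm')]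
    ring
  · rw [mem_Ico] at hm
    exact cumPow_eq_cumPowStep hm.1 (by omega)
  · rw [cumPow_succ_self, Icc_eq_empty (by omega), sum_empty]

/-- Theorem 1 of the paper on one subcarrier: for every nonnegative rate vector `r`
there is a unique nonnegative power vector `p` achieving the NOMA rates
`r m = B log₂(1 + H_m p_m / (H_m ∑_{l=m+1}^M p_l + σ²))`; it is
`p m = a m - a (m+1)` with `a` the cumulative powers, the total power has the
closed form `∑_m (σ²/H m - σ²/H (m+1)) 2^{(∑_{s=1}^m r s)/B} - σ²/H 1`
(with `σ²/H (M+1) := 0`), and `p m = 0 ↔ r m = 0`. -/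
theorem stmt_5 (M : ℕ) (hM : 0 < M) (σ2 B : ℝ) (hσ : 0 < σ2) (hB : 0 < B)
    (H : ℕ → ℝ) (hH : ∀ m ∈ Finset.Icc 1 M, 0 < H m)
    (r : ℕ → ℝ) (hr : ∀ m ∈ Finset.Icc 1 M, 0 ≤ r m)
    (p : ℕ → ℝ)
    (hpdef : ∀ m, p m = cumPow M σ2 B H r m - cumPow M σ2 B H r (m + 1)) :
    (∀ m ∈ Finset.Icc 1 M, 0 ≤ p m) ∧
    (∀ m ∈ Finset.Icc 1 M,
      r m = B * Real.logb 2
        (1 + H m * p m / (H m * (∑ l ∈ Finset.Icc (m + 1) M, p l) + σ2))) ∧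
    (∀ q : ℕ → ℝ, (∀ m ∈ Finset.Icc 1 M, 0 ≤ q m) →
      (∀ m ∈ Finset.Icc 1 M,
        r m = B * Real.logb 2
          (1 + H m * q m / (H m * (∑ l ∈ Finset.Icc (m + 1) M, q l) + σ2))) →
      ∀ m ∈ Finset.Icc 1 M, q m = p m) ∧
    (∑ m ∈ Finset.Icc 1 M, p m
      = (∑ m ∈ Finset.Icc 1 M,
          (σ2 / H m - if m < M then σ2 / H (m + 1) else 0)
            * (2 : ℝ) ^ ((∑ s ∈ Finset.Icc 1 m, r s) / B))
        - σ2 / H 1) ∧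
    (∀ m ∈ Finset.Icc 1 M, (p m = 0 ↔ r m = 0)) := by
  have hH0 : ∀ m ∈ Icc 1 M, 0 ≤ H m := fun m hm => (hH m hm).le
  have hstep : ∀ m ∈ Icc 1 M,
      p m = (2 ^ (r m / B) - 1) * (σ2 / H m + cumPow M σ2 B H r (m + 1)) := fun m hm =>
    (hpdef m).trans (cumPow_sub_cumPow_succ (mem_Icc.1 hm).1 (mem_Icc.1 hm).2)
  have htail : ∀ m ≤ M + 1, ∑ l ∈ Icc m M, p l = cumPow M σ2 B H r m := fun m hm => by
    simp only [hpdef]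
    exact sum_Icc_cumPow_sub_cumPow_succ hm
  have hp : ∀ m ∈ Icc 1 M, 0 ≤ p m := fun m hm =>
    (hpdef m).symm ▸ cumPow_sub_cumPow_succ_nonneg hσ.le hB.le hH0 hr hm
  have hrate : ∀ m ∈ Icc 1 M,
      r m = B * Real.logb 2 (1 + H m * p m / (H m * (∑ l ∈ Icc (m + 1) M, p l) + σ2)) := by
    intro m hm
    rw [htail (m + 1) (by rw [mem_Icc] at hm; omega)]
    have hI := cumPow_nonneg hσ.le hB.le hH0 hr (m := m + 1) (by omega)
    exact (eq_mul_logb_one_add_iff hB (hH m hm) hσ hI (hp m hm)).2 (hstep m hm)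
  refine ⟨hp, hrate, fun q hq hqrate => eq_of_sum_Icc_eq fun m hm => ?_,
    by rw [htail 1 (by omega), cumPow_one_eq hM],
    fun m hm => ⟨fun h0 => by simp [hrate m hm, h0], fun h0 => by simp [hstep m hm, h0]⟩⟩
  rw [sum_Icc_eq_cumPow_of_eq_rate hσ hB hH hq hqrate m hm, htail m (mem_Icc.1 hm).2]
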